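/- Let a, b be real numbers with 0 < a < 1 and let s = a + ib. If ζ(s) = 0, then −a/(a² + b²) = ∫₁^∞ {x} · cos(b·ln(x)) / x^{2−a} dx. -/

import Mathlib

/-!
For `1 < re w`, Abel summation of `ζ(w) = ∑ n⁻ʷ` gives
`ζ(w) = w ∫₁^∞ ⌊t⌋ t^(-w-1) dt = w/(w-1) - w ∫₁^∞ {t} t^(-w-1) dt`, i.e.
`w · M(-w) = 1 - ζ₀(w)`, where `M` is the Mellin transform of `{t}` cut off below `1` and
`ζ₀(w) = ζ(w) - 1/(w-1)` is entire. Since `{t}` is bounded, `M(-w)` is holomorphic on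
`0 < re w`, so the identity persists there. If `ζ(s) = 0` with `0 < re s < 1`, the functional
equation gives `ζ(1-s) = 0`, and `w = 1 - s` yields `∫₁^∞ {t} t^(s-2) dt = -1/s`; take real parts.
-/

open Complex MeasureTheory Set Filter Asymptotics
open scoped Topology

theorem mellin_indicator_Ioi {E : Type*} [NormedAddCommGroup E] [NormedSpace ℂ E]
    {c : ℝ} (hc : 0 ≤ c) (f : ℝ → E) (s : ℂ) :
    mellin ((Ioi c).indicator f) s = ∫ t in Ioi c, (t : ℂ) ^ (s - 1) • f t := by
  have : (fun t : ℝ ↦ (t : ℂ) ^ (s - 1) • (Ioi c).indicator f t) =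
      (Ioi c).indicator fun t ↦ (t : ℂ) ^ (s - 1) • f t := by
    ext t; by_cases ht : t ∈ Ioi c <;> simp [ht]
  rw [mellin, this, setIntegral_indicator measurableSet_Ioi, Ioi_inter_Ioi, sup_of_le_right hc]

theorem re_ofReal_cpow {x : ℝ} (hx : 0 < x) (z : ℂ) :
    ((x : ℂ) ^ z).re = x ^ z.re * Real.cos (z.im * Real.log x) := by
  rw [cpow_def_of_ne_zero (ofReal_ne_zero.mpr hx.ne'), ← ofReal_log hx.le, exp_re,
    re_ofReal_mul, im_ofReal_mul, Real.rpow_def_of_pos hx, mul_comm z.im]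

theorem riemannZeta_one_sub_eq_zero {s : ℂ} (hs0 : 0 < s.re) (hs1 : s.re < 1)
    (hζ : riemannZeta s = 0) : riemannZeta (1 - s) = 0 := by
  have hs_nat (n : ℕ) : s ≠ -n := fun h ↦ by
    have := congr_arg re h
    simp only [neg_re, natCast_re] at this
    linarith [n.cast_nonneg (α := ℝ)]
  rw [riemannZeta_one_sub hs_nat (fun h ↦ by simp [h] at hs1), hζ, mul_zero]

noncomputable def fractOnIoiOne : ℝ → ℂ :=
  (Ioi (1 : ℝ)).indicator fun t : ℝ ↦ ((Int.fract t : ℝ) : ℂ)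

theorem norm_fractOnIoiOne_le (t : ℝ) : ‖fractOnIoiOne t‖ ≤ 1 := by
  by_cases ht : t ∈ Ioi 1
  · rw [fractOnIoiOne, indicator_of_mem ht, norm_real, Real.norm_of_nonneg (Int.fract_nonneg t)]
    exact (Int.fract_lt_one t).le
  · simp [fractOnIoiOne, ht]

theorem measurable_fractOnIoiOne : Measurable fractOnIoiOne :=
  (measurable_ofReal.comp measurable_fract).indicator measurableSet_Ioi

theorem locallyIntegrable_fractOnIoiOne : LocallyIntegrable fractOnIoiOne :=
  (memLp_top_of_bound measurable_fractOnIoiOne.aestronglyMeasurable 1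
    (ae_of_all _ norm_fractOnIoiOne_le)).locallyIntegrable le_top

theorem fractOnIoiOne_isBigO_atTop : fractOnIoiOne =O[atTop] (· ^ (-(0 : ℝ))) :=
  isBigO_of_le' (c := 1) _ fun t ↦ by simpa using norm_fractOnIoiOne_le t

theorem fractOnIoiOne_isBigO_nhdsGT_zero (b : ℝ) : fractOnIoiOne =O[𝓝[>] 0] (· ^ (-b)) := by
  refine EventuallyEq.trans_isBigO ?_ (isBigO_zero _ _)
  filter_upwards [Ioo_mem_nhdsGT zero_lt_one] with t ht
  exact indicator_of_notMem (notMem_Ioi.mpr ht.2.le) _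

theorem mellinConvergent_fractOnIoiOne {s : ℂ} (hs : s.re < 0) :
    MellinConvergent fractOnIoiOne s :=
  mellinConvergent_of_isBigO_rpow (locallyIntegrable_fractOnIoiOne.locallyIntegrableOn _)
    fractOnIoiOne_isBigO_atTop hs (fractOnIoiOne_isBigO_nhdsGT_zero (s.re - 1)) (by linarith)

theorem differentiableAt_mellin_fractOnIoiOne {s : ℂ} (hs : s.re < 0) :
    DifferentiableAt ℂ (mellin fractOnIoiOne) s :=
  mellin_differentiableAt_of_isBigO_rpow (locallyIntegrable_fractOnIoiOne.locallyIntegrableOn _)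
    fractOnIoiOne_isBigO_atTop hs (fractOnIoiOne_isBigO_nhdsGT_zero (s.re - 1)) (by linarith)

theorem mellin_fractOnIoiOne (s : ℂ) :
    mellin fractOnIoiOne s =
      ∫ t in Ioi (1 : ℝ), (t : ℂ) ^ (s - 1) • ((Int.fract t : ℝ) : ℂ) :=
  mellin_indicator_Ioi zero_le_one _ s

theorem integrableOn_Ioi_one_cpow_smul_fract {s : ℂ} (hs : s.re < 0) :
    IntegrableOn (fun t : ℝ ↦ (t : ℂ) ^ (s - 1) • ((Int.fract t : ℝ) : ℂ)) (Ioi 1) :=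
  ((mellinConvergent_fractOnIoiOne hs).mono_set (Ioi_subset_Ioi zero_le_one)).congr_fun
    (fun t ht ↦ by simp only [fractOnIoiOne, indicator_of_mem ht]) measurableSet_Ioi

theorem mul_mellin_fractOnIoiOne_neg_of_one_lt_re {w : ℂ} (hw : 1 < w.re) :
    w * mellin fractOnIoiOne (-w) = 1 - riemannZeta₀ w := by
  have hw1 : w ≠ 1 := fun h ↦ by simp [h] at hw
  have hO : (fun n : ℕ ↦ ∑ k ∈ Finset.Icc 1 n, ‖(1 : ℕ → ℂ) k‖) =O[atTop]
      fun n ↦ (n : ℝ) ^ (1 : ℝ) := by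
    simp only [Pi.one_apply, norm_one, Finset.sum_const, Nat.card_Icc, add_tsub_cancel_right,
      nsmul_eq_mul, mul_one, Real.rpow_one]
    exact isBigO_refl _ _
  have hintegrand : ∀ t ∈ Ioi (1 : ℝ),
      (∑ k ∈ Finset.Icc 1 ⌊t⌋₊, (1 : ℕ → ℂ) k) * (t : ℂ) ^ (-(w + 1)) =
        (t : ℂ) ^ (-w) - (t : ℂ) ^ (-w - 1) • ((Int.fract t : ℝ) : ℂ) := by
    intro t ht
    have ht0 : (t : ℂ) ≠ 0 := ofReal_ne_zero.mpr (zero_lt_one.trans ht).ne'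
    have hfloor : (⌊t⌋₊ : ℝ) = t - Int.fract t := by
      rw [natCast_floor_eq_intCast_floor (zero_le_one.trans (mem_Ioi.mp ht).le),
        Int.self_sub_fract]
    have hsum : (∑ k ∈ Finset.Icc 1 ⌊t⌋₊, (1 : ℕ → ℂ) k) = t - Int.fract t := by
      simp only [Pi.one_apply, Finset.sum_const, Nat.card_Icc, add_tsub_cancel_right,
        nsmul_eq_mul, mul_one]
      exact_mod_cast hfloor
    rw [hsum, show -w = -(w + 1) + 1 by ring, cpow_add _ _ ht0, cpow_one,
      show -(w + 1) + 1 - 1 = -(w + 1) by ring, smul_eq_mul]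
    ring
  have hζ := LSeries_eq_mul_integral' 1 zero_le_one hw hO
  rw [LSeries_one_eq_riemannZeta hw, setIntegral_congr_fun measurableSet_Ioi hintegrand,
    integral_sub (integrableOn_Ioi_cpow_of_lt (by simpa using hw) zero_lt_one)
      (integrableOn_Ioi_one_cpow_smul_fract (by simpa using zero_lt_one.trans hw)),
    integral_Ioi_cpow_of_lt (by simpa using hw) zero_lt_one, ← mellin_fractOnIoiOne] at hζ
  rw [riemannZeta_eq_inv_sub_add hw1] at hζ
  have hinv : -1 / (-w + 1) = (w - 1)⁻¹ := by
    rw [neg_div, ← div_neg, neg_add, neg_neg, ← sub_eq_add_neg, one_div]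
  simp only [ofReal_one, one_cpow, hinv] at hζ
  linear_combination hζ + mul_inv_cancel₀ (sub_ne_zero.mpr hw1)

theorem mul_mellin_fractOnIoiOne_neg {w : ℂ} (hw : 0 < w.re) :
    w * mellin fractOnIoiOne (-w) = 1 - riemannZeta₀ w := by
  have hU : IsOpen {z : ℂ | 0 < z.re} := isOpen_lt continuous_const continuous_re
  have hF : AnalyticOnNhd ℂ (fun z ↦ z * mellin fractOnIoiOne (-z)) {z | 0 < z.re} :=
    DifferentiableOn.analyticOnNhd (fun z hz ↦ (differentiableAt_id.mul
      ((differentiableAt_mellin_fractOnIoiOne (by simpa using hz)).comp z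
        differentiableAt_id.neg)).differentiableWithinAt) hU
  have hG : AnalyticOnNhd ℂ (fun z ↦ 1 - riemannZeta₀ z) {z | 0 < z.re} :=
    (differentiable_riemannZeta₀.const_sub 1).differentiableOn.analyticOnNhd hU
  have hF_eq_G :
      (fun z ↦ z * mellin fractOnIoiOne (-z)) =ᶠ[𝓝 2] fun z ↦ 1 - riemannZeta₀ z := by
    filter_upwards [(isOpen_lt continuous_const continuous_re).mem_nhds
      (show (1 : ℝ) < (2 : ℂ).re by simp)] with z hz
    exact mul_mellin_fractOnIoiOne_neg_of_one_lt_re hz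
  exact hF.eqOn_of_preconnected_of_eventuallyEq hG (convex_halfSpace_re_gt 0).isPreconnected
    (show (0 : ℝ) < (2 : ℂ).re by simp) hF_eq_G hw

theorem integral_cpow_smul_fract_of_riemannZeta_eq_zero {s : ℂ} (hs0 : 0 < s.re) (hs1 : s.re < 1)
    (hζ : riemannZeta s = 0) :
    ∫ t in Ioi (1 : ℝ), (t : ℂ) ^ (s - 2) • ((Int.fract t : ℝ) : ℂ) = -s⁻¹ := by
  have hs : s ≠ 0 := ne_zero_of_re_pos hs0
  have h := mul_mellin_fractOnIoiOne_neg (w := 1 - s) (by simpa using hs1)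
  have hζ₀ : riemannZeta₀ (1 - s) = s⁻¹ := by
    have := riemannZeta_eq_inv_sub_add (s := 1 - s) (by simpa using hs)
    rw [riemannZeta_one_sub_eq_zero hs0 hs1 hζ, sub_sub_cancel_left, inv_neg] at this
    linear_combination -this
  rw [mellin_fractOnIoiOne, show -(1 - s) - 1 = s - 2 by ring, hζ₀] at h
  have hs1' : 1 - s ≠ 0 := sub_ne_zero.mpr fun h ↦ by simp [← h] at hs1
  refine mul_left_cancel₀ hs1' (h.trans ?_)
  field_simp
  ring

theorem re_part_eq_two (a b : ℝ) (h0 : 0 < a) (h1 : a < 1)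
    (hz : riemannZeta (a + b * Complex.I) = 0) :
    -a / (a ^ 2 + b ^ 2) =
      ∫ x : ℝ in Set.Ioi (1 : ℝ), Int.fract x * Real.cos (b * Real.log x) / x ^ (2 - a) := by
  set s : ℂ := a + b * I
  have hre : s.re = a := by simp [s]
  have him : s.im = b := by simp [s]
  have hint := integral_cpow_smul_fract_of_riemannZeta_eq_zero (hre ▸ h0) (hre ▸ h1) hz
  calc -a / (a ^ 2 + b ^ 2) = (-s⁻¹).re := by
        rw [neg_re, inv_re, normSq_apply, hre, him, neg_div]; ring_nf
    _ = ∫ x in Ioi (1 : ℝ), ((x : ℂ) ^ (s - 2) • ((Int.fract x : ℝ) : ℂ)).re := by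
        have hI := integrableOn_Ioi_one_cpow_smul_fract (s := s - 1) (by simp [hre, h1])
        rw [sub_sub, one_add_one_eq_two] at hI
        exact hint ▸ (integral_re hI).symm
    _ = _ := setIntegral_congr_fun measurableSet_Ioi fun x hx ↦ by
        have hx0 : 0 < x := zero_lt_one.trans hx
        rw [smul_eq_mul, re_mul_ofReal, re_ofReal_cpow hx0, sub_re, sub_im, hre, him,
          show (2 : ℂ).re = 2 by simp, show (2 : ℂ).im = 0 by simp, sub_zero,
          show a - 2 = -(2 - a) by ring, Real.rpow_neg hx0.le]
        ring
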